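/- Highest-weight property of the fundamental monodromy matrix: write T_a(λ) = Σ_{j,k} E_{jk} ⊗ T_{jk}(λ) with T_{jk}(λ) ∈ End((ℂ^N)^{⊗ℓ}), and let v⁺ = e₁ ⊗ ⋯ ⊗ e₁ ∈ (ℂ^N)^{⊗ℓ} (e₁ the first standard basis vector). Then for all λ with λ + a_n ≠ 0 for every n: (i) T_{jk}(λ) v⁺ = 0 whenever 1 ≤ k < j ≤ N; (ii) T_{11}(λ) v⁺ = ∏_{n=1}^ℓ (1 − ħ/(λ + a_n)) · v⁺; and (iii) T_{kk}(λ) v⁺ = v⁺ for 2 ≤ k ≤ N. -/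

import Mathlib

open Matrix Finset

noncomputable section

/-- The permutation operator `P` exchanging the tensor factors `p` and `q`
of `(ℂ^N)^{⊗ I}`, realized on the index type `I → Fin N`. -/
def permOp (N : ℕ) {I : Type} [Fintype I] [DecidableEq I] (p q : I) :
    Matrix (I → Fin N) (I → Fin N) ℂ :=
  fun f g => if f = g ∘ ⇑(Equiv.swap p q) then 1 else 0

/-- The rational R-matrix `R(λ) = I - (ħ/λ) P` acting on the tensor factors
`p` and `q`. -/
def Rmat (N : ℕ) (hbar : ℂ) {I : Type} [Fintype I] [DecidableEq I] (p q : I)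
    (lam : ℂ) : Matrix (I → Fin N) (I → Fin N) ℂ :=
  1 - (hbar / lam) • permOp N p q

/-- The one-site operator acting as the `N × N` matrix `A` on the tensor
factor `p` and as the identity elsewhere. -/
def siteOp (N : ℕ) {I : Type} [Fintype I] [DecidableEq I] (p : I)
    (A : Matrix (Fin N) (Fin N) ℂ) : Matrix (I → Fin N) (I → Fin N) ℂ :=
  fun f g => if Function.update g p (f p) = f then A (f p) (g p) else 0

/-- Ordinary partial transposition in the tensor factor `p`. -/
def ptransp {N : ℕ} {I : Type} [Fintype I] [DecidableEq I] (p : I)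
    (M : Matrix (I → Fin N) (I → Fin N) ℂ) : Matrix (I → Fin N) (I → Fin N) ℂ :=
  fun f g => M (Function.update f p (g p)) (Function.update g p (f p))

/-- The generalized transposition `A ↦ V⁻¹ Aᵀ V` applied in the tensor
factor `p` only. -/
def gtransp {N : ℕ} {I : Type} [Fintype I] [DecidableEq I]
    (V : Matrix (Fin N) (Fin N) ℂ) (p : I)
    (M : Matrix (I → Fin N) (I → Fin N) ℂ) : Matrix (I → Fin N) (I → Fin N) ℂ :=
  siteOp N p V⁻¹ * ptransp p M * siteOp N p V

/-- The antidiagonal matrix with all antidiagonal entries `1` (the case `θ = 1`). -/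
def Vplus (N : ℕ) : Matrix (Fin N) (Fin N) ℂ :=
  fun i j => if (i : ℕ) + (j : ℕ) + 1 = N then 1 else 0

/-- For even `N`, the antidiagonal matrix `antidiag(1,…,1,−1,…,−1)` whose first
`N/2` antidiagonal entries are `1` and last `N/2` are `-1` (the case `θ = -1`). -/
def Vminus (N : ℕ) : Matrix (Fin N) (Fin N) ℂ :=
  fun i j => if (i : ℕ) + (j : ℕ) + 1 = N then (if 2 * (i : ℕ) < N then 1 else -1) else 0

/-- The monodromy matrix `T_a(λ) = L_{a1}(λ) ⋯ L_{aℓ}(λ)` acting on the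
auxiliary space (`Sum.inl ()`) tensored with `ℓ` quantum spaces, where
`L_{an}(λ) = I − ħ P_{an}/(λ + a_n)`. -/
def Tmono (N ℓ : ℕ) (hbar : ℂ) (a : Fin ℓ → ℂ) (lam : ℂ) :
    Matrix ((Unit ⊕ Fin ℓ) → Fin N) ((Unit ⊕ Fin ℓ) → Fin N) ℂ :=
  ((List.finRange ℓ).map
    (fun n => Rmat N hbar (Sum.inl () : Unit ⊕ Fin ℓ) (Sum.inr n) (lam + a n))).prod

/-- The twisted monodromy matrix `S_a(λ) = T_a(λ) K_a T_a^{t_a}(−λ−ħρ)`,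
with `K = diagonal ζ`. -/
def Smat (N ℓ : ℕ) (hbar ρ : ℂ) (a : Fin ℓ → ℂ) (V : Matrix (Fin N) (Fin N) ℂ)
    (ζ : Fin N → ℂ) (lam : ℂ) :
    Matrix ((Unit ⊕ Fin ℓ) → Fin N) ((Unit ⊕ Fin ℓ) → Fin N) ℂ :=
  Tmono N ℓ hbar a lam * siteOp N (Sum.inl ()) (Matrix.diagonal ζ) *
    gtransp V (Sum.inl ()) (Tmono N ℓ hbar a (-lam - hbar * ρ))

/-- Partial trace over the auxiliary tensor factor. -/
def ptrAux (N ℓ : ℕ)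
    (M : Matrix ((Unit ⊕ Fin ℓ) → Fin N) ((Unit ⊕ Fin ℓ) → Fin N) ℂ) :
    Matrix (Fin ℓ → Fin N) (Fin ℓ → Fin N) ℂ :=
  fun f g => ∑ i : Fin N, M (Sum.elim (fun _ => i) f) (Sum.elim (fun _ => i) g)

/-- The transfer matrix `s(λ) = tr_a S_a(λ)`. -/
def transfer (N ℓ : ℕ) (hbar ρ : ℂ) (a : Fin ℓ → ℂ) (V : Matrix (Fin N) (Fin N) ℂ)
    (ζ : Fin N → ℂ) (lam : ℂ) : Matrix (Fin ℓ → Fin N) (Fin ℓ → Fin N) ℂ :=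
  ptrAux N ℓ (Smat N ℓ hbar ρ a V ζ lam)

/-- The operator-valued `(i,j)` entry of a matrix on (auxiliary) ⊗ (ℂ^N)^{⊗ℓ}:
if `M = Σ E_{ij} ⊗ M_{ij}` then `entryOp N ℓ M i j = M_{ij}`. -/
def entryOp (N ℓ : ℕ)
    (M : Matrix ((Unit ⊕ Fin ℓ) → Fin N) ((Unit ⊕ Fin ℓ) → Fin N) ℂ) (i j : Fin N) :
    Matrix (Fin ℓ → Fin N) (Fin ℓ → Fin N) ℂ :=
  fun f g => M (Sum.elim (fun _ => i) f) (Sum.elim (fun _ => j) g)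

/-- The pseudo-vacuum (highest weight) vector `v⁺ = e₁ ⊗ ⋯ ⊗ e₁` of `(ℂ^N)^{⊗ℓ}`. -/
def vplus (N ℓ : ℕ) : (Fin ℓ → Fin N) → ℂ :=
  fun f => if ∀ m, (f m : ℕ) = 0 then 1 else 0

/-!
Right multiplication by `L(z) = 1 - (ħ/z) P_{pq}` replaces the column of index `u` by that column
minus `ħ/z` times the column of index `u ∘ swap p q`. For the vacuum column, where the auxiliary
and all quantum indices equal the first basis index (`0 : Fin N`), every swap is trivial, so that
column of `T` is `∏ₙ (1 - ħ/(λ + aₙ))` times the unit column; this is `T₁₁ v⁺`. If only the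
quantum indices of `u` are `0`, the swap in `L_n` produces a column whose indices are `0` except
at site `n`, which `L_1 ⋯ L_{n-1}` does not touch; by the first case that column of
`L_1 ⋯ L_{n-1}` vanishes in every row with auxiliary index `j ≠ 0`. So in those rows the column
of `T` at `u` is the unit column: `T_{jk} v⁺ = δ_{jk} v⁺`.
-/

section RmatProd

variable {N : ℕ} {I ι : Type} [Fintype I] [DecidableEq I]

lemma mul_permOp_apply (p q : I) (M : Matrix (I → Fin N) (I → Fin N) ℂ) (x u : I → Fin N) :
    (M * permOp N p q) x u = M x (u ∘ Equiv.swap p q) := by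
  simp [Matrix.mul_apply, permOp]

lemma mul_Rmat_apply (hbar z : ℂ) (p q : I) (M : Matrix (I → Fin N) (I → Fin N) ℂ)
    (x u : I → Fin N) :
    (M * Rmat N hbar p q z) x u = M x u - hbar / z * M x (u ∘ Equiv.swap p q) := by
  rw [Rmat, Matrix.mul_sub, Matrix.mul_one, Matrix.mul_smul, Matrix.sub_apply, Matrix.smul_apply,
    mul_permOp_apply, smul_eq_mul]

lemma comp_swap_eq_self {α β : Type*} [DecidableEq α] {u : α → β} {i j : α} (h : u i = u j) :
    u ∘ Equiv.swap i j = u := by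
  rw [Equiv.comp_swap_eq_update, h, Function.update_eq_self, ← h, Function.update_eq_self]

variable (N) in
def rmatProd (hbar : ℂ) (p : I) (q : ι → I) (z : ι → ℂ) (ns : List ι) :
    Matrix (I → Fin N) (I → Fin N) ℂ :=
  (ns.map fun n => Rmat N hbar p (q n) (z n)).prod

lemma rmatProd_append_singleton_apply (hbar : ℂ) (p : I) (q : ι → I) (z : ι → ℂ)
    (ns : List ι) (n : ι) (x u : I → Fin N) :
    rmatProd N hbar p q z (ns ++ [n]) x u =
      rmatProd N hbar p q z ns x u -
        hbar / z n * rmatProd N hbar p q z ns x (u ∘ Equiv.swap p (q n)) := by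
  rw [rmatProd, List.map_append, List.prod_append, List.map_singleton, List.prod_singleton,
    mul_Rmat_apply, rmatProd]

lemma rmatProd_apply_eq_prod_mul_one_apply (hbar : ℂ) (p : I) (q : ι → I) (z : ι → ℂ) (ns : List ι)
    (x u : I → Fin N) (hu : ∀ n ∈ ns, u (q n) = u p) :
    rmatProd N hbar p q z ns x u =
      (ns.map fun n => 1 - hbar / z n).prod * (1 : Matrix (I → Fin N) (I → Fin N) ℂ) x u := by
  induction ns using List.reverseRecOn with
  | nil => simp [rmatProd]
  | append_singleton ns n ih =>
    rw [rmatProd_append_singleton_apply, comp_swap_eq_self (hu n (by simp)).symm,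
      ih fun m hm => hu m (by simp [hm])]
    simp only [List.map_append, List.map_singleton, List.prod_append, List.prod_singleton]
    ring

lemma rmatProd_apply_eq_one_apply (hbar : ℂ) (p : I) {q : ι → I} (hq : Function.Injective q)
    (hqp : ∀ n, q n ≠ p) (z : ι → ℂ) {ns : List ι} (hns : ns.Nodup) {c : Fin N}
    {x u : I → Fin N} (hu : ∀ n ∈ ns, u (q n) = c) (hx : x p ≠ c) :
    rmatProd N hbar p q z ns x u = (1 : Matrix (I → Fin N) (I → Fin N) ℂ) x u := by
  induction ns using List.reverseRecOn with
  | nil => simp [rmatProd]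
  | append_singleton ns n ih =>
    rw [← List.concat_eq_append, List.nodup_concat] at hns
    obtain ⟨hn, hns⟩ := hns
    set v := u ∘ Equiv.swap p (q n)
    have hv : ∀ m ∈ ns, v (q m) = v p := by
      intro m hm
      have hmn : q m ≠ q n := hq.ne fun h => hn (h ▸ hm)
      simp [v, Equiv.swap_apply_of_ne_of_ne (hqp m) hmn, hu m (by simp [hm]), hu n (by simp)]
    have hxv : x ≠ v := fun h => hx (by simp [h, v, hu n (by simp)])
    rw [rmatProd_append_singleton_apply, rmatProd_apply_eq_prod_mul_one_apply _ _ _ _ _ _ _ hv,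
      Matrix.one_apply_ne hxv, ih hns fun m hm => hu m (by simp [hm])]
    ring

end RmatProd

lemma Tmono_eq_rmatProd (N ℓ : ℕ) (hbar : ℂ) (a : Fin ℓ → ℂ) (lam : ℂ) :
    Tmono N ℓ hbar a lam =
      rmatProd N hbar (Sum.inl ()) Sum.inr (fun n => lam + a n) (List.finRange ℓ) :=
  rfl

lemma Tmono_apply_sumElim_of_ne {N ℓ : ℕ} (hbar : ℂ) (a : Fin ℓ → ℂ) (lam : ℂ) {j z : Fin N}
    (hj : j ≠ z) (k : Fin N) (f : Fin ℓ → Fin N) :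
    Tmono N ℓ hbar a lam (Sum.elim (fun _ => j) f) (Sum.elim (fun _ => k) fun _ => z) =
      (1 : Matrix ((Unit ⊕ Fin ℓ) → Fin N) ((Unit ⊕ Fin ℓ) → Fin N) ℂ)
        (Sum.elim (fun _ => j) f) (Sum.elim (fun _ => k) fun _ => z) :=
  rmatProd_apply_eq_one_apply _ _ Sum.inr_injective (fun _ => Sum.inr_ne_inl) _
    (List.nodup_finRange ℓ) (fun _ _ => rfl) hj

lemma Tmono_apply_sumElim_const {N ℓ : ℕ} (hbar : ℂ) (a : Fin ℓ → ℂ) (lam : ℂ) (z : Fin N)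
    (x : (Unit ⊕ Fin ℓ) → Fin N) :
    Tmono N ℓ hbar a lam x (Sum.elim (fun _ => z) fun _ => z) =
      (∏ n : Fin ℓ, (1 - hbar / (lam + a n))) *
        (1 : Matrix ((Unit ⊕ Fin ℓ) → Fin N) ((Unit ⊕ Fin ℓ) → Fin N) ℂ) x
          (Sum.elim (fun _ => z) fun _ => z) := by
  rw [Fin.prod_univ_def]
  exact rmatProd_apply_eq_prod_mul_one_apply _ _ _ _ _ _ _ fun _ _ => rfl

lemma vplus_eq_single {N : ℕ} (ℓ : ℕ) {z : Fin N} (hz : (z : ℕ) = 0) :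
    vplus N ℓ = Pi.single (fun _ => z) 1 := by
  funext f
  simp only [vplus, Pi.single_apply, funext_iff, Fin.ext_iff, hz]

lemma entryOp_mulVec_single_one {N ℓ : ℕ}
    (M : Matrix ((Unit ⊕ Fin ℓ) → Fin N) ((Unit ⊕ Fin ℓ) → Fin N) ℂ) (j k : Fin N)
    (g : Fin ℓ → Fin N) :
    entryOp N ℓ M j k *ᵥ Pi.single g 1 =
      fun f => M (Sum.elim (fun _ => j) f) (Sum.elim (fun _ => k) g) := by
  rw [mulVec_single_one]
  rfl

lemma one_apply_sumElim {N ℓ : ℕ} (j k : Fin N) (f g : Fin ℓ → Fin N) :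
    (1 : Matrix ((Unit ⊕ Fin ℓ) → Fin N) ((Unit ⊕ Fin ℓ) → Fin N) ℂ)
        (Sum.elim (fun _ => j) f) (Sum.elim (fun _ => k) g) =
      if j = k then (Pi.single g 1 : (Fin ℓ → Fin N) → ℂ) f else 0 := by
  by_cases hjk : j = k
  · simp only [hjk, if_true, Matrix.one_apply, Sum.elim_injective'.eq_iff, Pi.single_apply]
  · rw [if_neg hjk, Matrix.one_apply_ne]
    exact fun h => hjk (by simpa using congrFun h (Sum.inl ()))

theorem monodromy_highest_weight_general (N ℓ : ℕ)
    (hbar : ℂ) (a : Fin ℓ → ℂ) (lam : ℂ) :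
    (∀ j k : Fin N, (k : ℕ) < (j : ℕ) →
        (entryOp N ℓ (Tmono N ℓ hbar a lam) j k).mulVec (vplus N ℓ) = 0) ∧
    (∀ k : Fin N, (k : ℕ) = 0 →
        (entryOp N ℓ (Tmono N ℓ hbar a lam) k k).mulVec (vplus N ℓ) =
          (∏ n : Fin ℓ, (1 - hbar / (lam + a n))) • vplus N ℓ) ∧
    (∀ k : Fin N, 1 ≤ (k : ℕ) →
        (entryOp N ℓ (Tmono N ℓ hbar a lam) k k).mulVec (vplus N ℓ) = vplus N ℓ) := by
  refine ⟨fun j k hkj => ?_, fun k hk => ?_, fun k hk => ?_⟩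
  all_goals
    obtain ⟨z, hz⟩ : ∃ z : Fin N, (z : ℕ) = 0 := ⟨⟨0, k.pos⟩, rfl⟩
    rw [vplus_eq_single ℓ hz, entryOp_mulVec_single_one]
    funext f
  · rw [Tmono_apply_sumElim_of_ne _ _ _ (Fin.ne_of_val_ne (by omega)), one_apply_sumElim,
      if_neg (Fin.ne_of_val_ne (by omega)), Pi.zero_apply]
  · obtain rfl : k = z := Fin.ext (hk.trans hz.symm)
    rw [Tmono_apply_sumElim_const, one_apply_sumElim, if_pos rfl, Pi.smul_apply, smul_eq_mul]
  · rw [Tmono_apply_sumElim_of_ne _ _ _ (Fin.ne_of_val_ne (by omega)), one_apply_sumElim,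
      if_pos rfl]

/-- highest-weight property of the fundamental monodromy matrix:
`T_{jk}(λ)v⁺ = 0` for `k < j`, `T_{11}(λ)v⁺ = ∏ₙ(1 − ħ/(λ+aₙ))·v⁺`, and
`T_{kk}(λ)v⁺ = v⁺` for `k ≥ 2`. -/
theorem monodromy_highest_weight (N ℓ : ℕ) (hN : 2 ≤ N) (hℓ : 1 ≤ ℓ)
    (hbar : ℂ) (hhbar : hbar ≠ 0) (a : Fin ℓ → ℂ) (lam : ℂ)
    (hpol : ∀ n : Fin ℓ, lam + a n ≠ 0) :
    (∀ j k : Fin N, (k : ℕ) < (j : ℕ) →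
        (entryOp N ℓ (Tmono N ℓ hbar a lam) j k).mulVec (vplus N ℓ) = 0) ∧
    (∀ k : Fin N, (k : ℕ) = 0 →
        (entryOp N ℓ (Tmono N ℓ hbar a lam) k k).mulVec (vplus N ℓ) =
          (∏ n : Fin ℓ, (1 - hbar / (lam + a n))) • vplus N ℓ) ∧
    (∀ k : Fin N, 1 ≤ (k : ℕ) →
        (entryOp N ℓ (Tmono N ℓ hbar a lam) k k).mulVec (vplus N ℓ) = vplus N ℓ) :=
  monodromy_highest_weight_general N ℓ hbar a lam
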